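/- Let m = (δ₁ + δ₋₁)/2 be the symmetric Bernoulli measure on ℝ. For every r ∈ (0,1] and every a ∈ ℝ, (∫ e^{(a/r)·x} dm(x))^{r²} ≤ ∫ e^{a·x} dm(x); equivalently, (cosh(a/r))^{r²} ≤ cosh(a). -/

import Mathlib

/-!
By the computation `∫ exp (c x) dm(x) = cosh c`, the claim reads `r² log cosh (a / r) ≤ log cosh a`.
Since `|a| ≤ |a| / r`, this follows from `x ↦ log (cosh x) / x²` being antitone on `(0, ∞)`.
Its derivative has the sign of `x tanh x - 2 log cosh x`, which vanishes at `0` and is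
nonincreasing, because its own derivative is `(x - sinh x cosh x) / cosh² x ≤ 0`.
-/

open MeasureTheory

noncomputable def bernoulliSym : Measure ℝ :=
  (1 / 2 : ENNReal) • (Measure.dirac (1 : ℝ) + Measure.dirac (-1 : ℝ))

lemma integral_bernoulliSym (f : ℝ → ℝ) :
    ∫ x, f x ∂bernoulliSym = (f 1 + f (-1)) / 2 := by
  have hint : ∀ a : ℝ, Integrable f (Measure.dirac a) := fun a => integrable_dirac enorm_lt_top
  rw [bernoulliSym, integral_smul_measure, integral_add_measure (hint 1) (hint (-1)),
    integral_dirac, integral_dirac]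
  simp only [ENNReal.toReal_div, ENNReal.toReal_one, ENNReal.toReal_ofNat, smul_eq_mul]
  ring

lemma integral_exp_mul_bernoulliSym (c : ℝ) :
    ∫ x, Real.exp (c * x) ∂bernoulliSym = Real.cosh c := by
  rw [integral_bernoulliSym, Real.cosh_eq, mul_one, mul_neg_one]

namespace Real

lemma hasDerivAt_log_cosh (x : ℝ) : HasDerivAt (fun y => log (cosh y)) (sinh x / cosh x) x :=
  (hasDerivAt_cosh x).log (cosh_pos x).ne'

lemma mul_sinh_div_cosh_le_two_mul_log_cosh {x : ℝ} (hx : 0 ≤ x) :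
    x * sinh x / cosh x ≤ 2 * log (cosh x) := by
  set ψ : ℝ → ℝ := fun y => 2 * log (cosh y) - y * sinh y / cosh y
  have hψ' : ∀ y, HasDerivAt ψ ((sinh y * cosh y - y) / cosh y ^ 2) y := by
    intro y
    have hdiv := ((hasDerivAt_id' y).mul (hasDerivAt_sinh y)).div (hasDerivAt_cosh y)
      (cosh_pos y).ne'
    refine (((hasDerivAt_log_cosh y).const_mul 2).sub hdiv).congr_deriv ?_
    have hc : cosh y ≠ 0 := (cosh_pos y).ne'
    simp only [Pi.mul_apply]
    field_simp
    linear_combination (-y) * cosh_sq_sub_sinh_sq y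
  have hmono : MonotoneOn ψ (Set.Ici 0) := by
    refine monotoneOn_of_deriv_nonneg (convex_Ici 0)
      (fun y _ => (hψ' y).continuousAt.continuousWithinAt)
      (fun y _ => (hψ' y).differentiableAt.differentiableWithinAt) fun y hy => ?_
    rw [interior_Ici, Set.mem_Ioi] at hy
    have hsinh : y ≤ sinh y := self_le_sinh_iff.2 hy.le
    have : y ≤ sinh y * cosh y :=
      hsinh.trans (le_mul_of_one_le_right (hy.le.trans hsinh) (one_le_cosh y))
    rw [(hψ' y).deriv]
    exact div_nonneg (sub_nonneg.2 this) (sq_nonneg _)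
  have := hmono Set.self_mem_Ici (Set.mem_Ici.2 hx) hx
  simpa [ψ, sub_nonneg] using this

lemma antitoneOn_log_cosh_div_sq : AntitoneOn (fun x => log (cosh x) / x ^ 2) (Set.Ioi 0) := by
  have hderiv : ∀ x : ℝ, x ≠ 0 → HasDerivAt (fun x => log (cosh x) / x ^ 2)
      ((sinh x / cosh x * x ^ 2 - log (cosh x) * (2 * x)) / (x ^ 2) ^ 2) x := fun x hx =>
    (hasDerivAt_log_cosh x).div (by simpa using hasDerivAt_pow 2 x) (pow_ne_zero 2 hx)
  refine antitoneOn_of_deriv_nonpos (convex_Ioi 0)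
    (fun x hx => (hderiv x (ne_of_gt hx)).continuousAt.continuousWithinAt)
    (fun x hx => (hderiv x (ne_of_gt (interior_subset hx))).differentiableAt.differentiableWithinAt)
    fun x hx => ?_
  rw [interior_Ioi, Set.mem_Ioi] at hx
  rw [(hderiv x hx.ne').deriv]
  refine div_nonpos_of_nonpos_of_nonneg ?_ (by positivity)
  have hkey := mul_le_mul_of_nonneg_right (mul_sinh_div_cosh_le_two_mul_log_cosh hx.le) hx.le
  have hrw : sinh x / cosh x * x ^ 2 = x * sinh x / cosh x * x := by ring
  linarith

lemma cosh_div_rpow_sq_le {r : ℝ} (hr₀ : 0 < r) (hr₁ : r ≤ 1) (a : ℝ) :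
    cosh (a / r) ^ (r ^ 2 : ℝ) ≤ cosh a := by
  rcases eq_or_ne a 0 with rfl | ha
  · simp
  have hx : 0 < |a| := abs_pos.2 ha
  have hxy : |a| ≤ |a| / r := le_div_self hx.le hr₀ hr₁
  have hanti := antitoneOn_log_cosh_div_sq hx (hx.trans_le hxy) hxy
  simp only [div_pow] at hanti
  rw [div_div_eq_mul_div, div_le_div_iff_of_pos_right (by positivity),
] at hanti
  rw [← cosh_abs a, ← cosh_abs (a / r), abs_div, abs_of_pos hr₀,
    rpow_def_of_pos (cosh_pos _), ← exp_log (cosh_pos |a|), exp_le_exp]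
  exact hanti

end Real

theorem bernoulli_strong_hypercontractivity (r a : ℝ) (hr : r ∈ Set.Ioc (0 : ℝ) 1) :
    (∫ x, Real.exp ((a / r) * x) ∂bernoulliSym) ^ (r ^ 2 : ℝ) ≤
      ∫ x, Real.exp (a * x) ∂bernoulliSym := by
  rw [integral_exp_mul_bernoulliSym, integral_exp_mul_bernoulliSym]
  exact Real.cosh_div_rpow_sq_le hr.1 hr.2 a
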